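/- arXiv:1411.2755 — 4 statements merged into one kernel-verified Lean document; each statement's English description precedes it below -/
import Mathlib

section
/- Let Ḡ be the CDAG built from a DAG G on {v_1,...,v_p}, and let G̲ be the graph obtained from Ḡ by adding a new vertex z together with edges z → w_i for every i. Then for all disjoint subsets A, B, C of the vertices of Ḡ, A and B are c-separated by C in Ḡ if and only if A and B are d-separated by C in G̲. -/
open Relation

/-- Ancestors of a set `S` under directed edge relation `D`:
vertices with a (possibly trivial) directed path to some vertex of `S`. -/
def Ancestors {a : Type*} (D : a -> a -> Prop) (S : Set a) : Set a :=
  {u | exists s, s ∈ S ∧ Relation.ReflTransGen D u s}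

/-- `C` separates `A` and `B` in the undirected graph `U`. -/
def Separates {a : Type*} (U : SimpleGraph a) (A B C : Set a) : Prop :=
  ∀ x, x ∈ A → ∀ y, y ∈ B → ∀ p : U.Walk x y, ∃ c, c ∈ C ∧ c ∈ p.support

/-- Skeleton of the moralisation of the subgraph of `D` induced on `T`. -/
def MoralSkel {a : Type*} (D : a -> a -> Prop) (T : Set a) : SimpleGraph a :=
  SimpleGraph.fromRel (fun x y =>
    x ∈ T ∧ y ∈ T ∧ (D x y ∨ D y x ∨ ∃ z, z ∈ T ∧ D x z ∧ D y z))

/-- Classical d-separation in the DAG with edge relation `D`. -/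
def DSep {a : Type*} (D : a -> a -> Prop) (A B C : Set a) : Prop :=
  Separates (MoralSkel D (Ancestors D (A ∪ B ∪ C))) A B C

/-- Nodes of a CDAG: `Sum.inl i` is the primary node `v i`,
`Sum.inr i` is the secondary node `w i`. -/
abbrev CNode (p : ℕ) := Fin p ⊕ Fin p

/-- Edge relation of the CDAG built from a DAG `E` on primary nodes:
the edges of `E` together with `w i → v i`. -/
def cdagEdge {p : ℕ} (E : Fin p -> Fin p -> Prop) : CNode p -> CNode p -> Prop
  | Sum.inl i, Sum.inl j => E i j
  | Sum.inr i, Sum.inl j => i = j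
  | _, _ => False

/-- The undirected graph used for c-separation, given ancestral set `T`:
moralised skeleton plus an edge between every pair of secondary nodes present. -/
def CSepGraph {p : ℕ} (E : Fin p -> Fin p -> Prop) (T : Set (CNode p)) :
    SimpleGraph (CNode p) :=
  SimpleGraph.fromRel (fun x y =>
    x ∈ T ∧ y ∈ T ∧ (cdagEdge E x y ∨ cdagEdge E y x ∨
      (∃ z, z ∈ T ∧ cdagEdge E x z ∧ cdagEdge E y z) ∨
      (x.isRight = true ∧ y.isRight = true)))

/-- c-separation of `A` and `B` by `C` in the CDAG built from `E`. -/
def CSep {p : ℕ} (E : Fin p -> Fin p -> Prop) (A B C : Set (CNode p)) : Prop :=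
  Separates (CSepGraph E (Ancestors (cdagEdge E) (A ∪ B ∪ C))) A B C

/-- The extension of the CDAG by a vertex `z` with edges to all secondary nodes. -/
def extEdge {p : ℕ} (E : Fin p -> Fin p -> Prop) :
    (CNode p ⊕ Unit) -> (CNode p ⊕ Unit) -> Prop
  | Sum.inl x, Sum.inl y => cdagEdge E x y
  | Sum.inr _, Sum.inl (Sum.inr _) => True
  | _, _ => False

/-!
The vertex `z` has no parents and its children are exactly the secondary nodes, so the
ancestral set of the extended graph is that of the CDAG together with `z` (if non-empty),
and its moral graph is the moral graph of the CDAG plus a star joining `z` to the secondary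
ancestors.
Eliminating `z` (deleting it and making its neighbours a clique) therefore yields exactly the
c-separation graph. Eliminating a vertex that is not in the separator preserves separation:
a path through `z` is short-cut along the clique edge between its two neighbours on the path,
and a clique edge is replaced by the detour through `z`.
-/

section Separation

variable {α : Type*}

def avoidAdj (U : SimpleGraph α) (C : Set α) (u v : α) : Prop :=
  U.Adj u v ∧ u ∉ C ∧ v ∉ C

lemma reflTransGen_avoidAdj_of_walk (U : SimpleGraph α) (C : Set α) {x y : α}
    (w : U.Walk x y) (hw : ∀ v ∈ w.support, v ∉ C) : ReflTransGen (avoidAdj U C) x y := by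
  induction w with
  | nil => exact .refl
  | cons h w ih =>
    simp only [SimpleGraph.Walk.support_cons, List.mem_cons, forall_eq_or_imp] at hw
    exact .head ⟨h, hw.1, hw.2 _ w.start_mem_support⟩ (ih hw.2)

lemma exists_walk_of_reflTransGen_avoidAdj (U : SimpleGraph α) (C : Set α) {x y : α}
    (h : ReflTransGen (avoidAdj U C) x y) (hx : x ∉ C) :
    ∃ w : U.Walk x y, ∀ v ∈ w.support, v ∉ C := by
  induction h with
  | refl => exact ⟨.nil, by simpa using hx⟩
  | tail _ hbc ih =>
    obtain ⟨w, hw⟩ := ih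
    refine ⟨w.concat hbc.1, fun v hv => ?_⟩
    rw [SimpleGraph.Walk.support_concat, List.mem_append, List.mem_singleton] at hv
    rcases hv with hv | rfl
    exacts [hw v hv, hbc.2.2]

lemma separates_iff_not_reflTransGen (U : SimpleGraph α) (A B C : Set α) :
    Separates U A B C ↔
      ∀ x ∈ A, x ∉ C → ∀ y ∈ B, ¬ ReflTransGen (avoidAdj U C) x y := by
  constructor
  · intro hsep x hx hxC y hy h
    obtain ⟨w, hw⟩ := exists_walk_of_reflTransGen_avoidAdj U C h hxC
    obtain ⟨c, hc, hcw⟩ := hsep x hx y hy w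
    exact hw c hcw hc
  · intro h x hx y hy w
    by_contra! hw
    exact h x hx (fun hxC => hw x hxC w.start_mem_support) y hy
      (reflTransGen_avoidAdj_of_walk U C w fun v hv hvC => hw v hvC hv)

end Separation

namespace SimpleGraph

variable {α : Type*}

def eliminate (H : SimpleGraph (α ⊕ Unit)) : SimpleGraph α where
  Adj u v := H.Adj (.inl u) (.inl v) ∨
    (u ≠ v ∧ H.Adj (.inl u) (.inr ()) ∧ H.Adj (.inl v) (.inr ()))
  symm := ⟨fun _ _ => Or.imp Adj.symm fun ⟨hne, hu, hv⟩ => ⟨hne.symm, hv, hu⟩⟩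
  loopless := ⟨fun _ => Or.rec (H.loopless.irrefl _) fun h => h.1 rfl⟩

variable (H : SimpleGraph (α ⊕ Unit)) (C : Set α)

@[simp]
lemma eliminate_adj {u v : α} : H.eliminate.Adj u v ↔ H.Adj (.inl u) (.inl v) ∨
    (u ≠ v ∧ H.Adj (.inl u) (.inr ()) ∧ H.Adj (.inl v) (.inr ())) :=
  Iff.rfl

lemma reflTransGen_avoidAdj_inl_of_eliminate {x y : α}
    (h : ReflTransGen (avoidAdj H.eliminate C) x y) :
    ReflTransGen (avoidAdj H (Sum.inl '' C)) (.inl x) (.inl y) := by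
  have hinl : ∀ {u}, u ∉ C → (Sum.inl u : α ⊕ Unit) ∉ Sum.inl '' C := fun hu => by
    simpa using hu
  have hinr : (Sum.inr () : α ⊕ Unit) ∉ Sum.inl '' C := by simp
  refine h.lift' _ fun u v ⟨huv, hu, hv⟩ => ?_
  rcases huv with huv | ⟨-, huz, hvz⟩
  · exact .single ⟨huv, hinl hu, hinl hv⟩
  · exact .tail (.single ⟨huz, hinl hu, hinr⟩) ⟨hvz.symm, hinr, hinl hv⟩

lemma exists_reflTransGen_eliminate_of_inl {x : α} {m : α ⊕ Unit}
    (h : ReflTransGen (avoidAdj H (Sum.inl '' C)) (.inl x) m) :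
    ∃ u, ReflTransGen (avoidAdj H.eliminate C) x u ∧
      (m = .inl u ∨ m = .inr () ∧ H.Adj (.inl u) (.inr ()) ∧ u ∉ C) := by
  have hinl : ∀ {u}, (Sum.inl u : α ⊕ Unit) ∉ Sum.inl '' C → u ∉ C := fun hu => by
    simpa using hu
  induction h with
  | refl => exact ⟨x, .refl, .inl rfl⟩
  | @tail _ c _ hbc ih =>
    obtain ⟨hadj, hb, hc⟩ := hbc
    obtain ⟨u, hu, rfl | ⟨rfl, huz, huC⟩⟩ := ih
    · rcases c with v | ⟨⟩
      · exact ⟨v, hu.tail ⟨.inl hadj, hinl hb, hinl hc⟩, .inl rfl⟩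
      · exact ⟨u, hu, .inr ⟨rfl, hadj, hinl hb⟩⟩
    · rcases c with v | ⟨⟩
      · by_cases huv : u = v
        · exact ⟨u, hu, .inl (huv ▸ rfl)⟩
        · exact ⟨v, hu.tail ⟨.inr ⟨huv, huz, hadj.symm⟩, huC, hinl hc⟩, .inl rfl⟩
      · exact (H.loopless.irrefl _ hadj).elim

lemma separates_eliminate_iff (A B : Set α) :
    Separates H.eliminate A B C ↔
      Separates H (Sum.inl '' A) (Sum.inl '' B) (Sum.inl '' C) := by
  simp only [separates_iff_not_reflTransGen, Set.forall_mem_image,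
    Sum.inl_injective.mem_set_image]
  constructor
  · intro h x hx hxC y hy hxy
    obtain ⟨u, hxu, hu⟩ := exists_reflTransGen_eliminate_of_inl H C hxy
    obtain rfl : y = u := by simpa using hu
    exact h x hx hxC y hy hxu
  · intro h x hx hxC y hy hxy
    exact h hx hxC hy (reflTransGen_avoidAdj_inl_of_eliminate H C hxy)

end SimpleGraph

section CDAG

variable {p : ℕ} (E : Fin p → Fin p → Prop)

@[simp]
lemma not_cdagEdge_inr (x : CNode p) (j : Fin p) : ¬ cdagEdge E x (.inr j) := by
  rcases x with _ | _ <;> simp [cdagEdge]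

@[simp]
lemma extEdge_inl_inl (x y : CNode p) : extEdge E (.inl x) (.inl y) ↔ cdagEdge E x y :=
  Iff.rfl

@[simp]
lemma extEdge_inr_inl (x : CNode p) : extEdge E (.inr ()) (.inl x) ↔ x.isRight := by
  rcases x with _ | _ <;> simp [extEdge]

@[simp]
lemma not_extEdge_inr (m : CNode p ⊕ Unit) (b : Unit) : ¬ extEdge E m (.inr b) := by
  rcases m with _ | _ <;> simp [extEdge]

lemma reflTransGen_extEdge_inl {x : CNode p} {m : CNode p ⊕ Unit}
    (h : ReflTransGen (extEdge E) (.inl x) m) :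
    ∃ y, m = .inl y ∧ ReflTransGen (cdagEdge E) x y := by
  induction h with
  | refl => exact ⟨x, rfl, .refl⟩
  | @tail _ c _ hbc ih =>
    obtain ⟨y, rfl, hy⟩ := ih
    rcases c with z | ⟨⟩
    · exact ⟨z, rfl, hy.tail hbc⟩
    · exact (not_extEdge_inr E _ _ hbc).elim

lemma inl_mem_ancestors_extEdge_iff (S : Set (CNode p)) (x : CNode p) :
    .inl x ∈ Ancestors (extEdge E) (Sum.inl '' S) ↔ x ∈ Ancestors (cdagEdge E) S := by
  constructor
  · rintro ⟨_, ⟨s, hs, rfl⟩, h⟩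
    obtain ⟨y, hy, hxy⟩ := reflTransGen_extEdge_inl E h
    exact ⟨s, hs, Sum.inl_injective hy ▸ hxy⟩
  · rintro ⟨s, hs, h⟩
    exact ⟨.inl s, ⟨s, hs, rfl⟩, h.lift Sum.inl fun _ _ => id⟩

lemma inr_mem_ancestors_extEdge {S : Set (CNode p)} {x : CNode p}
    (hx : x ∈ Ancestors (cdagEdge E) S) : .inr () ∈ Ancestors (extEdge E) (Sum.inl '' S) := by
  obtain ⟨s, hs, -⟩ := hx
  refine ⟨.inl s, ⟨s, hs, rfl⟩, ?_⟩
  rcases s with j | j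
  · exact .head (b := .inl (.inr j)) (by simp) (.single (by simp [cdagEdge]))
  · exact .single (by simp)

lemma moralSkel_extEdge_adj_inl_inl (S : Set (CNode p)) (u v : CNode p) :
    (MoralSkel (extEdge E) (Ancestors (extEdge E) (Sum.inl '' S))).Adj (.inl u) (.inl v) ↔
      (MoralSkel (cdagEdge E) (Ancestors (cdagEdge E) S)).Adj u v := by
  simp only [MoralSkel, SimpleGraph.fromRel_adj, Sum.exists, inl_mem_ancestors_extEdge_iff,
    extEdge_inl_inl, not_extEdge_inr, ne_eq, Sum.inl.injEq, and_false, exists_false, or_false]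

lemma moralSkel_extEdge_adj_inl_inr (S : Set (CNode p)) (u : CNode p) :
    (MoralSkel (extEdge E) (Ancestors (extEdge E) (Sum.inl '' S))).Adj (.inl u) (.inr ()) ↔
      u.isRight ∧ u ∈ Ancestors (cdagEdge E) S := by
  simp only [MoralSkel, SimpleGraph.fromRel_adj, Sum.exists, inl_mem_ancestors_extEdge_iff,
    extEdge_inl_inl, extEdge_inr_inl, not_extEdge_inr, not_cdagEdge_inr, ne_eq,
    Sum.isRight_inl, Sum.isRight_inr, Bool.false_eq_true, reduceCtorEq, not_false_eq_true,
    and_false, false_and, exists_false, or_false, false_or, true_and]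
  constructor
  · rintro (⟨hu, -, hr⟩ | ⟨-, hu, hr⟩) <;> exact ⟨hr, hu⟩
  · rintro ⟨hr, hu⟩
    exact .inl ⟨hu, inr_mem_ancestors_extEdge E hu, hr⟩

lemma csepGraph_adj_iff (T : Set (CNode p)) (u v : CNode p) :
    (CSepGraph E T).Adj u v ↔ (MoralSkel (cdagEdge E) T).Adj u v ∨
      (u ≠ v ∧ (u.isRight ∧ u ∈ T) ∧ (v.isRight ∧ v ∈ T)) := by
  simp only [CSepGraph, MoralSkel, SimpleGraph.fromRel_adj]
  grind

lemma csepGraph_eq_eliminate (S : Set (CNode p)) :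
    CSepGraph E (Ancestors (cdagEdge E) S) =
      (MoralSkel (extEdge E) (Ancestors (extEdge E) (Sum.inl '' S))).eliminate := by
  ext u v
  rw [csepGraph_adj_iff, SimpleGraph.eliminate_adj, moralSkel_extEdge_adj_inl_inl,
    moralSkel_extEdge_adj_inl_inr, moralSkel_extEdge_adj_inl_inr]

end CDAG

theorem csep_iff_dsep_extended_general {p : ℕ} (E : Fin p -> Fin p -> Prop)
    (A B C : Set (CNode p)) :
    CSep E A B C ↔
      DSep (extEdge E) (Sum.inl '' A) (Sum.inl '' B) (Sum.inl '' C) := by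
  rw [CSep, DSep, csepGraph_eq_eliminate, SimpleGraph.separates_eliminate_iff,
    ← Set.image_union, ← Set.image_union]

theorem csep_iff_dsep_extended {p : ℕ} (E : Fin p -> Fin p -> Prop)
    (hacyc : ∀ v, ¬ Relation.TransGen E v v) (A B C : Set (CNode p))
    (hAB : Disjoint A B) (hAC : Disjoint A C) (hBC : Disjoint B C) :
    CSep E A B C ↔
      DSep (extEdge E) (Sum.inl '' A) (Sum.inl '' B) (Sum.inl '' C) :=
  csep_iff_dsep_extended_general E A B C
end

section
/- The independence model induced by c-separation on a CDAG satisfies the decomposition axiom: for disjoint node sets A, B, C, D, if A is c-separated from B ∪ D by C, then A is c-separated from D by C. -/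
/-!
Shrinking the second set from `B ∪ D` to `D` shrinks the ancestral set, and the c-separation
graph is monotone in the ancestral set. So every walk from `A` to `D` in the graph of the
conclusion is also a walk from `A` to `B ∪ D` in the graph of the hypothesis, and is blocked
by `C` there.
-/

open Relation

lemma ancestors_mono {a : Type*} (D : a -> a -> Prop) {S S' : Set a} (h : S ⊆ S') :
    Ancestors D S ⊆ Ancestors D S' :=
  fun _ ⟨s, hs, hpath⟩ => ⟨s, h hs, hpath⟩

lemma Separates.anti_graph {a : Type*} {U U' : SimpleGraph a} {A B C : Set a}
    (hUU' : U ≤ U') (h : Separates U' A B C) : Separates U A B C := by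
  intro x hx y hy w
  simpa only [SimpleGraph.Walk.support_mapLe_eq_support] using h x hx y hy (w.mapLe hUU')

lemma Separates.mono_right {a : Type*} {U : SimpleGraph a} {A B B' C : Set a}
    (hB : B' ⊆ B) (h : Separates U A B C) : Separates U A B' C :=
  fun x hx y hy => h x hx y (hB hy)

lemma SimpleGraph.fromRel_mono {a : Type*} {r s : a -> a -> Prop} (h : ∀ x y, r x y → s x y) :
    SimpleGraph.fromRel r ≤ SimpleGraph.fromRel s :=
  fun x y ⟨hne, hxy⟩ => ⟨hne, hxy.imp (h x y) (h y x)⟩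

lemma csepGraph_mono {p : ℕ} (E : Fin p -> Fin p -> Prop) {T T' : Set (CNode p)}
    (h : T ⊆ T') : CSepGraph E T ≤ CSepGraph E T' :=
  SimpleGraph.fromRel_mono fun _ _ ⟨hx, hy, hxy⟩ =>
    ⟨h hx, h hy, hxy.imp_right (Or.imp_right (Or.imp_left fun ⟨z, hz, hzxy⟩ => ⟨z, h hz, hzxy⟩))⟩

theorem csep_decomposition_general {p : ℕ} (E : Fin p -> Fin p -> Prop)
    (A B C D : Set (CNode p))
    (h : CSep E A (B ∪ D) C) : CSep E A D C := by
  have hanc : Ancestors (cdagEdge E) (A ∪ D ∪ C) ⊆ Ancestors (cdagEdge E) (A ∪ (B ∪ D) ∪ C) :=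
    ancestors_mono _ (by grind)
  exact (h.anti_graph (csepGraph_mono E hanc)).mono_right Set.subset_union_right

theorem csep_decomposition {p : ℕ} (E : Fin p -> Fin p -> Prop)
    (hacyc : ∀ v, ¬ Relation.TransGen E v v) (A B C D : Set (CNode p))
    (hAB : Disjoint A B) (hAC : Disjoint A C) (hAD : Disjoint A D)
    (hBC : Disjoint B C) (hBD : Disjoint B D) (hCD : Disjoint C D)
    (h : CSep E A (B ∪ D) C) : CSep E A D C :=
  csep_decomposition_general E A B C D h
end

section
/- The map from DAGs to CDAG independence models is injective: if G and H are distinct DAGs on vertex set {v_1,...,v_p}, then the independence models M_G and M_H induced by c-separation on the corresponding CDAGs Ḡ and H̄ are distinct, i.e., there exist disjoint node sets A, B, C such that A is c-separated from B by C in exactly one of Ḡ, H̄. -/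
open Relation

/-
Test whether `w_j` and `v_i` are c-separated by all remaining nodes. That conditioning set makes
the ancestral set the whole CDAG, where `w_j` and `v_i` (for `i ≠ j`) are adjacent exactly when
moralising the collider `w_j → v_j ← v_i` marries them, i.e. exactly when `v_i → v_j` is an edge.
Distinct DAGs differ in some edge `v_i → v_j`, and acyclicity forces `i ≠ j`.
-/

theorem ancestors_univ {a : Type*} (D : a → a → Prop) : Ancestors D Set.univ = Set.univ :=
  Set.eq_univ_of_forall fun u => ⟨u, Set.mem_univ u, Relation.ReflTransGen.refl⟩

theorem separates_singleton_singleton_compl_iff {a : Type*} (U : SimpleGraph a) {x y : a}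
    (hxy : x ≠ y) : Separates U {x} {y} {x, y}ᶜ ↔ ¬ U.Adj x y := by
  constructor
  · intro hsep hadj
    obtain ⟨c, hc, hcw⟩ := hsep x rfl y rfl hadj.toWalk
    simp_all
  · rintro hnadj _ rfl _ rfl (_ | @⟨_, z, _, hxz, -⟩)
    · exact (hxy rfl).elim
    · refine ⟨z, ?_, by simp⟩
      simp only [Set.mem_compl_iff, Set.mem_insert_iff, Set.mem_singleton_iff, not_or]
      exact ⟨(U.ne_of_adj hxz).symm, fun hzy => hnadj (hzy ▸ hxz)⟩

theorem cSepGraph_univ_adj_inr_inl_iff {p : ℕ} (D : Fin p → Fin p → Prop) {i j : Fin p}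
    (hij : i ≠ j) : (CSepGraph D Set.univ).Adj (Sum.inr j) (Sum.inl i) ↔ D i j := by
  simp [CSepGraph, cdagEdge, Ne.symm hij]

theorem cSep_inr_inl_compl_iff {p : ℕ} (D : Fin p → Fin p → Prop) {i j : Fin p} (hij : i ≠ j) :
    CSep D {Sum.inr j} {Sum.inl i} {Sum.inr j, Sum.inl i}ᶜ ↔ ¬ D i j := by
  rw [CSep, Set.singleton_union, Set.union_compl_self, ancestors_univ,
    separates_singleton_singleton_compl_iff _ Sum.inr_ne_inl, cSepGraph_univ_adj_inr_inl_iff D hij]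

theorem cdag_independence_model_injective {p : ℕ}
    (E F : Fin p -> Fin p -> Prop)
    (hE : ∀ v, ¬ Relation.TransGen E v v) (hF : ∀ v, ¬ Relation.TransGen F v v)
    (hne : E ≠ F) :
    ∃ A B C : Set (CNode p), Disjoint A B ∧ Disjoint A C ∧ Disjoint B C ∧
      ¬ (CSep E A B C ↔ CSep F A B C) := by
  obtain ⟨i, j, hEF⟩ : ∃ i j, ¬ (E i j ↔ F i j) := by
    by_contra! h
    exact hne (funext₂ fun i j => propext (h i j))
  have hij : i ≠ j := by
    rintro rfl
    exact hEF ⟨fun h => absurd (.single h) (hE i), fun h => absurd (.single h) (hF i)⟩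
  refine ⟨{Sum.inr j}, {Sum.inl i}, {Sum.inr j, Sum.inl i}ᶜ, by simp, by simp, by simp, ?_⟩
  rw [cSep_inr_inl_compl_iff E hij, cSep_inr_inl_compl_iff F hij]
  tauto
end

section
/- Graphical characterisation of edges via c-separation: for a DAG G on {v_1,...,v_p} with associated CDAG Ḡ, the edge v_i → v_j is absent from G if and only if there exists a subset S of pa_G(j) \ {i} such that w_i is c-separated from v_j by {w_j} ∪ {v_k : k ∈ S} in Ḡ. -/
open Relation

/-!
If `v_i → v_j` is absent, take `S = pa(j)`. Every primary node of the ancestral set is an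
ancestor of `v_j`, so by acyclicity no child of `v_j` lies in it; hence `v_j` has no children
and no co-parents in the c-separation graph, and its only neighbours are `w_j` and its parents,
which all lie in the separating set. Conversely, an edge `v_i → v_j` gives the path
`w_i — v_i — v_j`, which avoids `{w_j} ∪ v_S` since `i ∉ S`, `i ≠ j` and `v_j` is not its own
parent.
-/

theorem separates_of_neighbor_mem {a : Type*} {U : SimpleGraph a} {A B C : Set a}
    (hAB : Disjoint A B) (hC : ∀ y ∈ B, ∀ u, U.Adj u y → u ∈ C) : Separates U A B C := by
  intro x hx y hy w
  have hw : ¬ w.Nil := SimpleGraph.Walk.not_nil_of_ne (hAB.ne_of_mem hx hy)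
  exact ⟨w.penultimate, hC y hy _ (w.adj_penultimate hw), w.getVert_mem_support _⟩

section CDAG

variable {p : ℕ} {E : Fin p → Fin p → Prop}

theorem exists_inl_of_reflTransGen_cdagEdge {m : Fin p} {c : CNode p}
    (h : ReflTransGen (cdagEdge E) (.inl m) c) : ∃ n, c = .inl n ∧ ReflTransGen E m n := by
  induction h with
  | refl => exact ⟨m, rfl, .refl⟩
  | @tail b c _ hstep ih =>
    obtain ⟨n, rfl, hn⟩ := ih
    cases c with
    | inl k => exact ⟨k, rfl, hn.tail hstep⟩
    | inr k => exact absurd hstep (by simp [cdagEdge])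

theorem reflTransGen_of_inl_mem_ancestors {i j m : Fin p}
    (hm : .inl m ∈ Ancestors (cdagEdge E)
      ({.inr i} ∪ {.inl j} ∪ ({.inr j} ∪ Sum.inl '' {k | E k j}))) :
    ReflTransGen E m j := by
  obtain ⟨s, hs, hr⟩ := hm
  obtain ⟨n, rfl, hmn⟩ := exists_inl_of_reflTransGen_cdagEdge hr
  simp only [Set.mem_union, Set.mem_singleton_iff, Set.mem_image, Set.mem_ofPred_eq,
    Sum.inl.injEq, reduceCtorEq, false_or] at hs
  rcases hs with rfl | ⟨k, hkj, rfl⟩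
  · exact hmn
  · exact hmn.tail hkj

theorem CSepGraph.adj_of_cdagEdge {T : Set (CNode p)} {x y : CNode p} (hxy : x ≠ y)
    (hx : x ∈ T) (hy : y ∈ T) (h : cdagEdge E x y) : (CSepGraph E T).Adj x y :=
  (SimpleGraph.fromRel_adj _ _ _).2 ⟨hxy, .inl ⟨hx, hy, .inl h⟩⟩

theorem CSepGraph.adj_inl {T : Set (CNode p)} {u : CNode p} {j : Fin p}
    (hu : (CSepGraph E T).Adj u (.inl j)) :
    u ∈ T ∧ (cdagEdge E u (.inl j) ∨ ∃ z ∈ T, cdagEdge E (.inl j) z) := by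
  rw [CSepGraph, SimpleGraph.fromRel_adj] at hu
  obtain ⟨-, ⟨hu, -, h⟩ | ⟨-, hu, h⟩⟩ := hu
  · rcases h with h | h | ⟨z, hz, -, hjz⟩ | ⟨-, h⟩
    · exact ⟨hu, .inl h⟩
    · exact ⟨hu, .inr ⟨u, hu, h⟩⟩
    · exact ⟨hu, .inr ⟨z, hz, hjz⟩⟩
    · simp at h
  · rcases h with h | h | ⟨z, hz, hjz, -⟩ | ⟨h, -⟩
    · exact ⟨hu, .inr ⟨u, hu, h⟩⟩
    · exact ⟨hu, .inl h⟩
    · exact ⟨hu, .inr ⟨z, hz, hjz⟩⟩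
    · simp at h

/-- A child of `v_j` in an ancestral set of `v_j` would close a cycle. -/
theorem CSepGraph.adj_inl_of_forall_reflTransGen (hacyc : ∀ v, ¬ TransGen E v v)
    {T : Set (CNode p)} {j : Fin p} (hT : ∀ m, .inl m ∈ T → ReflTransGen E m j)
    {u : CNode p} (hu : (CSepGraph E T).Adj u (.inl j)) :
    u = .inr j ∨ ∃ k, E k j ∧ u = .inl k := by
  obtain ⟨-, hparent | ⟨z, hz, hjz⟩⟩ := CSepGraph.adj_inl hu
  · rcases u with k | k
    · exact .inr ⟨k, hparent, rfl⟩
    · exact .inl (congrArg Sum.inr hparent)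
  · rcases z with n | n
    · exact (hacyc j (.head' hjz (hT n hz))).elim
    · exact hjz.elim

end CDAG

theorem csep_edge_characterisation {p : ℕ} (E : Fin p -> Fin p -> Prop)
    (hacyc : ∀ v, ¬ Relation.TransGen E v v) (i j : Fin p) (hij : i ≠ j) :
    ¬ E i j ↔
      ∃ S : Set (Fin p), S ⊆ {k | E k j} \ {i} ∧
        CSep E {Sum.inr i} {Sum.inl j} ({Sum.inr j} ∪ Sum.inl '' S) := by
  constructor
  · intro hnE
    refine ⟨{k | E k j}, fun k hk => ⟨hk, fun hki => hnE (hki ▸ hk)⟩, ?_⟩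
    refine separates_of_neighbor_mem (by simp) fun y hy u hu => ?_
    rcases hy with rfl
    rcases CSepGraph.adj_inl_of_forall_reflTransGen hacyc
      (fun m => reflTransGen_of_inl_mem_ancestors) hu with rfl | ⟨k, hkj, rfl⟩
    · exact .inl rfl
    · exact .inr ⟨k, hkj, rfl⟩
  · rintro ⟨S, hS, hsep⟩ hE
    have hjj : ¬ E j j := fun h => hacyc j (.single h)
    let T := Ancestors (cdagEdge E) ({Sum.inr i} ∪ {Sum.inl j} ∪ ({Sum.inr j} ∪ Sum.inl '' S))
    have hvj : Sum.inl j ∈ T := ⟨_, by simp, .refl⟩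
    have hwi : Sum.inr i ∈ T := ⟨_, by simp, .refl⟩
    have hvi : Sum.inl i ∈ T := ⟨Sum.inl j, by simp, .single hE⟩
    obtain ⟨c, hcC, hc⟩ := hsep _ rfl _ rfl <|
      .cons (CSepGraph.adj_of_cdagEdge (by simp) hwi hvi rfl)
        (.cons (CSepGraph.adj_of_cdagEdge (by simpa using hij) hvi hvj hE) .nil)
    simp only [SimpleGraph.Walk.support_cons, SimpleGraph.Walk.support_nil, List.mem_cons,
      List.not_mem_nil, or_false] at hc
    rcases hc with rfl | rfl | rfl <;>
      simp only [Set.mem_union, Set.mem_singleton_iff, Set.mem_image, Sum.inr.injEq,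
        Sum.inl.injEq, reduceCtorEq, exists_eq_right, and_false, exists_false, false_or,
        or_false] at hcC
    · exact hij hcC
    · exact (hS hcC).2 rfl
    · exact hjj (hS hcC).1
end
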